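/- arXiv:2201.03264 — 5 statements merged into one kernel-verified Lean document; each statement's English description precedes it below -/
import Mathlib

section
/- If a = b = 0 and c ≠ 0, then the Kukles system (K) has no nonconstant periodic solutions contained in the open unit disk: every differentiable curve γ = (x, y) : ℝ → ℝ² satisfying x'(t) = −y(t), y'(t) = x(t) + c·y(t)(x(t)² + y(t)² − 1) for all t, whose image lies in {(x,y) : x² + y² < 1}, and which is periodic (there exists T > 0 with γ(t+T) = γ(t) for all t), is constant. -/
/-- A monotone periodic function (with positive period) is constant. -/
lemma antitone_periodic_const {F : ℝ → ℝ} (hA : Antitone F) {T : ℝ} (hT : 0 < T)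
    (hP : Function.Periodic F T) : ∀ t s : ℝ, F t = F s := by
  have key : ∀ t s : ℝ, t ≤ s → F t = F s := by
    intro t s hts
    obtain ⟨n, hn⟩ := exists_nat_ge ((s - t) / T)
    have hnT : s ≤ t + n * T := by
      have := (div_le_iff₀ hT).mp hn
      linarith
    have h1 : F s ≤ F t := hA hts
    have h2 : F (t + n * T) ≤ F s := hA hnT
    have h3 : F (t + n * T) = F t := (hP.nat_mul n) t
    linarith
  intro t s
  rcases le_total t s with h | h
  · exact key t s h
  · exact (key s t h).symm

/-- If `a = b = 0` and `c ≠ 0`, the Kukles system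
`ẋ = −y, ẏ = x + c·y(x²+y²−1)` has no nonconstant periodic solutions contained in the
open unit disk: every periodic solution whose image lies in the open unit disk is
constant. -/
theorem kukles_no_periodic_in_disk (c : ℝ) (hc : c ≠ 0)
    (x y : ℝ → ℝ)
    (hx : ∀ t : ℝ, HasDerivAt x (-(y t)) t)
    (hy : ∀ t : ℝ, HasDerivAt y (x t + c * y t * ((x t) ^ 2 + (y t) ^ 2 - 1)) t)
    (hdisk : ∀ t : ℝ, (x t) ^ 2 + (y t) ^ 2 < 1)
    (hper : ∃ T > (0:ℝ), ∀ t : ℝ, x (t + T) = x t ∧ y (t + T) = y t) :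
    ∀ t s : ℝ, x t = x s ∧ y t = y s := by
  obtain ⟨T, hT, hPer⟩ := hper
  -- Energy function and its derivative
  set E : ℝ → ℝ := fun t => (x t) ^ 2 + (y t) ^ 2 with hE
  have hE' : ∀ t, HasDerivAt E (2 * c * (y t) ^ 2 * (E t - 1)) t := by
    intro t
    have h := ((hx t).pow 2).add ((hy t).pow 2)
    convert h using 1
    · rfl
    · rfl
    · ext u; simp [hE]
    simp [hE]
    ring
  -- F = c • E is antitone
  have hF' : ∀ t, HasDerivAt (fun u => c * E u) (2 * c ^ 2 * (y t) ^ 2 * (E t - 1)) t := by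
    intro t
    have := (hE' t).const_mul c
    convert this using 1
    · rfl
    · rfl
    ring
  have hFanti : Antitone (fun u => c * E u) := by
    apply antitone_of_deriv_nonpos
    · exact fun t => ((hF' t).differentiableAt)
    · intro t
      rw [(hF' t).deriv]
      have h1 : E t - 1 < 0 := by have := hdisk t; simp only [hE]; linarith
      have h2 : (0:ℝ) ≤ 2 * c ^ 2 * (y t) ^ 2 := by positivity
      nlinarith [sq_nonneg (y t)]
  have hFper : Function.Periodic (fun u => c * E u) T := by
    intro t
    simp only [hE]
    rw [(hPer t).1, (hPer t).2]
  have hFconst := antitone_periodic_const hFanti hT hFper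
  have hEconst : ∀ t s, E t = E s := by
    intro t s
    have := hFconst t s
    field_simp at this
    tauto
  -- E is the constant function E 0, so its derivative is 0
  have hEfun : E = fun _ => E 0 := funext fun t => hEconst t 0
  have hderiv0 : ∀ t, 2 * c * (y t) ^ 2 * (E t - 1) = 0 := by
    intro t
    have h := hE' t
    rw [hEfun] at h
    have h2 := h.unique (hasDerivAt_const t (E 0))
    rw [hEconst t 0]
    simpa using h2
  have hy0 : ∀ t, y t = 0 := by
    intro t
    have h := hderiv0 t
    have h1 : E t - 1 < 0 := by have := hdisk t; simp only [hE]; linarith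
    have : (y t) ^ 2 = 0 := by
      rcases mul_eq_zero.mp h with h2 | h2
      · rcases mul_eq_zero.mp h2 with h3 | h3
        · rcases mul_eq_zero.mp h3 with h4 | h4
          · norm_num at h4
          · exact absurd h4 hc
        · exact h3
      · linarith
    exact pow_eq_zero_iff (n := 2) (by norm_num) |>.mp this
  have hx0 : ∀ t, x t = 0 := by
    intro t
    have hyfun : y = fun _ => 0 := funext hy0
    have h := hy t
    rw [hyfun] at h
    have := h.unique (hasDerivAt_const t 0)
    simp at this
    linarith [this]
  intro t s
  rw [hx0 t, hx0 s, hy0 t, hy0 s]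
  exact ⟨rfl, rfl⟩
end

section
/- For every h > 0 and all real a, b, c, setting x(t) = √(2h)·cos t and y(t) = −√(2h)·sin t, the Melnikov integral satisfies ∫₀^{2π} y(t)·[ y(t)·(1 − x(t)² − y(t)²)·(a·x(t) + b·y(t) + c) ] dt = 2π·c·h·(1 − 2h). In particular, for c ≠ 0 this function of h vanishes on (0,∞) exactly at h = 1/2, which corresponds to the unit circle x² + y² = 1. -/
open Real intervalIntegral

lemma sin_cube_int : ∫ t in (0:ℝ)..(2*Real.pi), Real.sin t ^ 3 = 0 := by
  rw [show (3:ℕ) = 1 + 2 from rfl, integral_sin_pow]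
  simp

/-- For every `h > 0` and all real `a, b, c`, with
`x(t) = √(2h)·cos t`, `y(t) = −√(2h)·sin t`, the Melnikov integral satisfies
`∫₀^{2π} y(t)·[y(t)·(1 − x(t)² − y(t)²)·(a·x(t) + b·y(t) + c)] dt = 2π·c·h·(1 − 2h)`.
In particular, for `c ≠ 0` this function of `h` vanishes on `(0,∞)` exactly at
`h = 1/2` (the unit circle). -/
theorem kukles_melnikov_integral (h a b c : ℝ) (hh : 0 < h) :
    (∫ t in (0:ℝ)..(2 * Real.pi),
        (-(Real.sqrt (2 * h)) * Real.sin t) *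
          ((-(Real.sqrt (2 * h)) * Real.sin t) *
            (1 - (Real.sqrt (2 * h) * Real.cos t) ^ 2
               - (-(Real.sqrt (2 * h)) * Real.sin t) ^ 2) *
            (a * (Real.sqrt (2 * h) * Real.cos t)
               + b * (-(Real.sqrt (2 * h)) * Real.sin t) + c)))
      = 2 * Real.pi * c * h * (1 - 2 * h)
    ∧ (c ≠ 0 → ∀ h' : ℝ, 0 < h' →
        (2 * Real.pi * c * h' * (1 - 2 * h') = 0 ↔ h' = 1 / 2)) := by
  constructor
  · set K := Real.sqrt (2 * h) with hK
    have hK2 : K ^ 2 = 2 * h := Real.sq_sqrt (by linarith)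
    have hrw : ∀ t : ℝ,
        (-K * Real.sin t) *
          ((-K * Real.sin t) *
            (1 - (K * Real.cos t) ^ 2 - (-K * Real.sin t) ^ 2) *
            (a * (K * Real.cos t) + b * (-K * Real.sin t) + c))
        = (2*h*(1-2*h)*(a*K)) * (Real.sin t ^ 2 * Real.cos t)
          + (-(2*h*(1-2*h)*(b*K))) * (Real.sin t ^ 3)
          + (2*h*(1-2*h)*c) * (Real.sin t ^ 2) := by
      intro t
      have hpyth : Real.sin t ^ 2 + Real.cos t ^ 2 = 1 := Real.sin_sq_add_cos_sq t
      linear_combination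
        (Real.sin t ^ 2 * (a * (K * Real.cos t) + b * (-K * Real.sin t) + c) *
          (1 - K ^ 2 - 2 * h)) * hK2
        - (Real.sin t ^ 2 * (a * (K * Real.cos t) + b * (-K * Real.sin t) + c) * K ^ 4) * hpyth
    have hI1 : IntervalIntegrable (fun t => (2*h*(1-2*h)*(a*K)) * (Real.sin t ^ 2 * Real.cos t)) MeasureTheory.volume 0 (2*Real.pi) := by
      apply Continuous.intervalIntegrable; fun_prop
    have hI2 : IntervalIntegrable (fun t => (-(2*h*(1-2*h)*(b*K))) * (Real.sin t ^ 3)) MeasureTheory.volume 0 (2*Real.pi) := by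
      apply Continuous.intervalIntegrable; fun_prop
    have hI3 : IntervalIntegrable (fun t => (2*h*(1-2*h)*c) * (Real.sin t ^ 2)) MeasureTheory.volume 0 (2*Real.pi) := by
      apply Continuous.intervalIntegrable; fun_prop
    calc (∫ t in (0:ℝ)..(2 * Real.pi),
        (-K * Real.sin t) *
          ((-K * Real.sin t) *
            (1 - (K * Real.cos t) ^ 2 - (-K * Real.sin t) ^ 2) *
            (a * (K * Real.cos t) + b * (-K * Real.sin t) + c)))
        = ∫ t in (0:ℝ)..(2 * Real.pi),
            ((2*h*(1-2*h)*(a*K)) * (Real.sin t ^ 2 * Real.cos t)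
            + (-(2*h*(1-2*h)*(b*K))) * (Real.sin t ^ 3)
            + (2*h*(1-2*h)*c) * (Real.sin t ^ 2)) := by
          apply intervalIntegral.integral_congr
          intro t _; exact hrw t
      _ = (∫ t in (0:ℝ)..(2 * Real.pi), (2*h*(1-2*h)*(a*K)) * (Real.sin t ^ 2 * Real.cos t))
          + (∫ t in (0:ℝ)..(2 * Real.pi), (-(2*h*(1-2*h)*(b*K))) * (Real.sin t ^ 3))
          + (∫ t in (0:ℝ)..(2 * Real.pi), (2*h*(1-2*h)*c) * (Real.sin t ^ 2)) := by
          rw [intervalIntegral.integral_add (hI1.add hI2) hI3,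
              intervalIntegral.integral_add hI1 hI2]
      _ = 2 * Real.pi * c * h * (1 - 2 * h) := by
          rw [intervalIntegral.integral_const_mul, intervalIntegral.integral_const_mul,
              intervalIntegral.integral_const_mul, sin_cube_int,
              integral_sin_sq_mul_cos, integral_sin_sq]
          simp [Real.sin_two_pi, Real.cos_two_pi]
          ring
  · intro hc h' hh'
    have hpi : (0:ℝ) < Real.pi := Real.pi_pos
    constructor
    · intro h0
      have : h' * (1 - 2 * h') = 0 := by
        have h2 : 2 * Real.pi * c ≠ 0 := by positivity
        have := mul_eq_zero.mp (by linarith [h0] : (2 * Real.pi * c) * (h' * (1 - 2 * h')) = 0)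
        tauto
      rcases mul_eq_zero.mp this with h1 | h1
      · linarith
      · linarith
    · intro h0; rw [h0]; ring
end

section
/- Let a, b, c be real numbers with c ≠ 0. There exists ε₀ > 0 such that for every ε with 0 < ε < ε₀, the system ẋ = −y, ẏ = x + ε·y(x²+y²−1)(ax+by+c) has the unit circle x² + y² = 1 as a limit cycle: the unit circle is the image of a nonconstant periodic solution, and there exists an open neighborhood U of the unit circle such that the image of every nonconstant periodic solution contained in U is exactly the unit circle. -/
/-- `γ` is a solution of `ẋ = −y, ẏ = x + ε·y(x²+y²−1)(ax+by+c)`. -/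
def IsEpsKuklesSol (a b c ε : ℝ) (γ : ℝ → ℝ × ℝ) : Prop :=
  ∀ t : ℝ, HasDerivAt γ
    (-(γ t).2,
      (γ t).1 + ε * (γ t).2 * ((γ t).1 ^ 2 + (γ t).2 ^ 2 - 1) *
        (a * (γ t).1 + b * (γ t).2 + c)) t

/-- `γ` is periodic: `γ(t+T) = γ(t)` for some `T > 0`. -/
def IsPeriodicCurve (γ : ℝ → ℝ × ℝ) : Prop :=
  ∃ T > (0:ℝ), ∀ t : ℝ, γ (t + T) = γ t

/-- `γ` is nonconstant. -/
def IsNonconstCurve (γ : ℝ → ℝ × ℝ) : Prop :=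
  ∃ t s : ℝ, γ t ≠ γ s

/-- The unit circle `x² + y² = 1` in the plane. -/
def unitCircleSet : Set (ℝ × ℝ) := {p : ℝ × ℝ | p.1 ^ 2 + p.2 ^ 2 = 1}

lemma exists_angle {u v : ℝ} (h : u ^ 2 + v ^ 2 = 1) :
    ∃ θ : ℝ, Real.cos θ = u ∧ Real.sin θ = v := by
  have habs : ‖(⟨u, v⟩ : ℂ)‖ = 1 := by
    have : ‖(⟨u, v⟩ : ℂ)‖ ^ 2 = 1 := by
      rw [Complex.sq_norm, Complex.normSq_mk]; ring_nf; linarith [h]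
    nlinarith [norm_nonneg (⟨u, v⟩ : ℂ), this]
  obtain ⟨θ, hθ⟩ := (Complex.norm_eq_one_iff _).1 habs
  rw [Complex.exp_mul_I] at hθ
  refine ⟨θ, ?_, ?_⟩
  · have := congrArg Complex.re hθ; simpa [Complex.cos_ofReal_re] using this
  · have := congrArg Complex.im hθ; simpa [Complex.sin_ofReal_re] using this

lemma range_circle_param {x y : ℝ → ℝ} (p q : ℝ)
    (hpq : p ^ 2 + q ^ 2 = 1)
    (hx : ∀ t, x t = p * Real.cos t - q * Real.sin t)
    (hy : ∀ t, y t = p * Real.sin t + q * Real.cos t) :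
    Set.range (fun t => ((x t, y t) : ℝ × ℝ)) = {z : ℝ × ℝ | z.1 ^ 2 + z.2 ^ 2 = 1} := by
  ext ⟨u, v⟩
  simp only [Set.mem_range, Set.mem_setOf_eq, Prod.mk.injEq]
  constructor
  · rintro ⟨t, ht, ht2⟩
    rw [← ht, ← ht2, hx, hy]
    nlinarith [Real.sin_sq_add_cos_sq t]
  · intro huv
    obtain ⟨α, hα1, hα2⟩ := exists_angle hpq
    obtain ⟨β, hβ1, hβ2⟩ := exists_angle huv
    refine ⟨β - α, ?_, ?_⟩
    · rw [hx, ← hα1, ← hα2, ← hβ1]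
      have := Real.cos_add α (β - α)
      rw [show α + (β - α) = β by ring] at this
      linarith [this]
    · rw [hy, ← hα1, ← hα2, ← hβ2]
      have := Real.sin_add α (β - α)
      rw [show α + (β - α) = β by ring] at this
      linarith [this]

/-- A solution of the pure rotation starting on the unit circle has range the unit circle. -/
lemma rotation_range {γ : ℝ → ℝ × ℝ}
    (hd : ∀ t, HasDerivAt γ (-(γ t).2, (γ t).1) t)
    (h0 : (γ 0).1 ^ 2 + (γ 0).2 ^ 2 = 1) :
    Set.range γ = {z : ℝ × ℝ | z.1 ^ 2 + z.2 ^ 2 = 1} := by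
  set X : ℝ → ℝ := fun t => (γ t).1 with hX
  set Y : ℝ → ℝ := fun t => (γ t).2 with hY
  have hXd : ∀ t, HasDerivAt X (-(Y t)) t := fun t => (hd t).fst
  have hYd : ∀ t, HasDerivAt Y (X t) t := fun t => (hd t).snd
  -- rotating frame
  have hP : ∀ t, HasDerivAt (fun t => X t * Real.cos t + Y t * Real.sin t) 0 t := by
    intro t
    have := ((hXd t).mul (Real.hasDerivAt_cos t)).add ((hYd t).mul (Real.hasDerivAt_sin t))
    exact this.congr_deriv (by ring)
  have hQ : ∀ t, HasDerivAt (fun t => -X t * Real.sin t + Y t * Real.cos t) 0 t := by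
    intro t
    have := (((hXd t).neg).mul (Real.hasDerivAt_sin t)).add ((hYd t).mul (Real.hasDerivAt_cos t))
    exact this.congr_deriv (by simp only [Pi.neg_apply]; ring)
  have hPc : ∀ t, X t * Real.cos t + Y t * Real.sin t = X 0 := by
    intro t
    have := is_const_of_deriv_eq_zero (fun s => (hP s).differentiableAt)
      (fun s => (hP s).deriv) t 0
    simpa using this
  have hQc : ∀ t, -X t * Real.sin t + Y t * Real.cos t = Y 0 := by
    intro t
    have := is_const_of_deriv_eq_zero (fun s => (hQ s).differentiableAt)
      (fun s => (hQ s).deriv) t 0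
    simpa using this
  have hx : ∀ t, X t = X 0 * Real.cos t - Y 0 * Real.sin t := by
    intro t
    have h1 := hPc t; have h2 := hQc t
    linear_combination Real.cos t * h1 - Real.sin t * h2 - X t * (Real.sin_sq_add_cos_sq t)
  have hy : ∀ t, Y t = X 0 * Real.sin t + Y 0 * Real.cos t := by
    intro t
    have h1 := hPc t; have h2 := hQc t
    linear_combination Real.sin t * h1 + Real.cos t * h2 - Y t * (Real.sin_sq_add_cos_sq t)
  have : Set.range (fun t => ((X t, Y t) : ℝ × ℝ)) = {z : ℝ × ℝ | z.1 ^ 2 + z.2 ^ 2 = 1} :=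
    range_circle_param (X 0) (Y 0) h0 hx hy
  simpa using this

private lemma lin1 {J K IH T ε M : ℝ} (e4 : K = J - IH) (h1 : K + J ≥ T * (1/2))
    (h4 : 4*ε*M*T ≤ T/4) (h5a : -(4*ε*M*T) ≤ IH) : T/8 ≤ J := by linarith

/-- Uniqueness for the scalar linear ODE g' = u g. -/
private lemma linODE {g u : ℝ → ℝ} (hu : Continuous u)
    (hg : ∀ t, HasDerivAt g (u t * g t) t) (t₀ : ℝ) :
    ∀ t, g t = g t₀ * Real.exp (∫ s in t₀..t, u s) := by
  set Φ : ℝ → ℝ := fun t => ∫ s in t₀..t, u s with hΦ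
  have hΦd : ∀ t, HasDerivAt Φ (u t) t := fun t =>
    (hu.integral_hasStrictDerivAt t₀ t).hasDerivAt
  have hH : ∀ t, HasDerivAt (fun t => g t * Real.exp (-Φ t)) 0 t := by
    intro t
    have h1 : HasDerivAt (fun t => Real.exp (-Φ t)) (Real.exp (-Φ t) * (-u t)) t :=
      (Real.hasDerivAt_exp _).comp t ((hΦd t).neg)
    have := (hg t).mul h1
    exact this.congr_deriv (by ring)
  have hconst : ∀ t, g t * Real.exp (-Φ t) = g t₀ * Real.exp (-Φ t₀) := fun t =>
    is_const_of_deriv_eq_zero (fun s => (hH s).differentiableAt)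
      (fun s => (hH s).deriv) t t₀
  intro t
  have h0 : Φ t₀ = 0 := by simp [hΦ]
  have h := hconst t
  rw [h0, neg_zero, Real.exp_zero, mul_one] at h
  have : g t * Real.exp (-Φ t) * Real.exp (Φ t) = g t₀ * Real.exp (Φ t) := by rw [h]
  rwa [mul_assoc, ← Real.exp_add, neg_add_cancel, Real.exp_zero, mul_one] at this

set_option maxHeartbeats 2000000 in
private lemma caseB_false {a b c ε : ℝ} {γ : ℝ → ℝ × ℝ} {T : ℝ}
    (hγ : IsEpsKuklesSol a b c ε γ) (hε : 0 < ε) (hT : 0 < T)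
    (per : ∀ t, γ (t + T) = γ t)
    (hU : ∀ t, 1/2 < (γ t).1 ^ 2 + (γ t).2 ^ 2 ∧ (γ t).1 ^ 2 + (γ t).2 ^ 2 < 3/2)
    (hg0 : (γ 0).1 ^ 2 + (γ 0).2 ^ 2 - 1 ≠ 0)
    (hε1 : ε * (2*|a| + 2*|b| + |c|) ≤ 1/16)
    (hε2 : 32 * ε * (2*|a| + 2*|b| + |c|) * (|a| + 2*|b|) < |c|) :
    False := by
  set X : ℝ → ℝ := fun t => (γ t).1 with hXdef
  set Y : ℝ → ℝ := fun t => (γ t).2 with hYdef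
  have hXd : ∀ t, HasDerivAt X (-(Y t)) t := fun t => (hγ t).fst
  have hYd : ∀ t, HasDerivAt Y
      (X t + ε * Y t * (X t ^ 2 + Y t ^ 2 - 1) * (a * X t + b * Y t + c)) t :=
    fun t => (hγ t).snd
  have Cγ : Continuous γ := continuous_iff_continuousAt.2 fun t => (hγ t).continuousAt
  have Cx : Continuous X := continuous_fst.comp Cγ
  have Cy : Continuous Y := continuous_snd.comp Cγ
  -- bounds on the annulus
  have hXb : ∀ t, |X t| ≤ 2 := by
    intro t
    have h := (hU t).2
    have h2 : X t ^ 2 ≤ 4 := by nlinarith [sq_nonneg (Y t)]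
    exact abs_le.2 ⟨by nlinarith [sq_nonneg (X t + 2)], by nlinarith [sq_nonneg (X t - 2)]⟩
  have hYb : ∀ t, |Y t| ≤ 2 := by
    intro t
    have h := (hU t).2
    have h2 : Y t ^ 2 ≤ 4 := by nlinarith [sq_nonneg (X t)]
    exact abs_le.2 ⟨by nlinarith [sq_nonneg (Y t + 2)], by nlinarith [sq_nonneg (Y t - 2)]⟩
  have hGb : ∀ t, |X t ^ 2 + Y t ^ 2 - 1| ≤ 1/2 := by
    intro t
    have h1 := (hU t).1; have h2 := (hU t).2
    exact abs_le.2 ⟨by linarith, by linarith⟩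
  have hLb : ∀ t, |a * X t + b * Y t + c| ≤ 2*|a| + 2*|b| + |c| := by
    intro t
    calc |a * X t + b * Y t + c| ≤ |a * X t| + |b * Y t| + |c| := by
          exact (abs_add_le _ _).trans (by gcongr; exact abs_add_le _ _)
      _ ≤ 2*|a| + 2*|b| + |c| := by
          rw [abs_mul, abs_mul]
          have := hXb t; have := hYb t
          have ha0 := abs_nonneg a; have hb0 := abs_nonneg b
          nlinarith [abs_nonneg (X t), abs_nonneg (Y t)]
  have hfb : ∀ t, |ε * (X t ^ 2 + Y t ^ 2 - 1) * (a * X t + b * Y t + c)|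
      ≤ ε * (2*|a| + 2*|b| + |c|) / 2 := by
    intro t
    rw [abs_mul, abs_mul, abs_of_pos hε]
    have h1 := hGb t; have h2 := hLb t
    have h3 := abs_nonneg (X t ^ 2 + Y t ^ 2 - 1)
    have h4 := abs_nonneg (a * X t + b * Y t + c)
    have hM0 : (0:ℝ) ≤ 2*|a| + 2*|b| + |c| := by positivity
    nlinarith [mul_le_mul h1 h2 h4 (by norm_num : (0:ℝ) ≤ 1/2), hε.le]
  -- periodicity of values
  have hγT : γ T = γ 0 := by simpa using per 0
  have hXT : X T = X 0 := by show (γ T).1 = (γ 0).1; rw [hγT]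
  have hYT : Y T = Y 0 := by show (γ T).2 = (γ 0).2; rw [hγT]
  -- generic: integral of the derivative of a T-periodic quantity vanishes
  have key0 : ∀ (F D : ℝ → ℝ), (∀ t, HasDerivAt F (D t) t) → Continuous D → F T = F 0 →
      (∫ t in (0:ℝ)..T, D t) = 0 := by
    intro F D hFD hD hper
    rw [intervalIntegral.integral_eq_sub_of_hasDerivAt (fun t _ => hFD t)
      (hD.intervalIntegrable _ _), hper, sub_self]
  -- identity E1 : ∫ X²Y = 0
  have e1 : (∫ t in (0:ℝ)..T, X t ^ 2 * Y t) = 0 := by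
    have h := key0 (fun t => X t ^ 3) (fun t => (-3) * (X t ^ 2 * Y t))
      (fun t => ((hXd t).pow 3).congr_deriv (by push_cast; ring))
      (by fun_prop) (by simp only [hXT])
    rw [intervalIntegral.integral_const_mul] at h
    linarith
  -- identity E2 : ∫ XY² = - ∫ Y³ f
  have e2 : (∫ t in (0:ℝ)..T, X t * Y t ^ 2)
      = - ∫ t in (0:ℝ)..T, Y t ^ 3 * (ε * (X t ^ 2 + Y t ^ 2 - 1) * (a * X t + b * Y t + c)) := by
    have h := key0 (fun t => Y t ^ 3)
      (fun t => 3 * (X t * Y t ^ 2)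
        + 3 * (Y t ^ 3 * (ε * (X t ^ 2 + Y t ^ 2 - 1) * (a * X t + b * Y t + c))))
      (fun t => ((hYd t).pow 3).congr_deriv (by push_cast; ring))
      (by fun_prop) (by simp only [hYT])
    rw [intervalIntegral.integral_add
        ((by fun_prop : Continuous fun t => 3 * (X t * Y t ^ 2)).intervalIntegrable _ _)
        ((by fun_prop : Continuous fun t => 3 * (Y t ^ 3 *
          (ε * (X t ^ 2 + Y t ^ 2 - 1) * (a * X t + b * Y t + c)))).intervalIntegrable _ _),
      intervalIntegral.integral_const_mul, intervalIntegral.integral_const_mul] at h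
    linarith
  -- identity E3 : ∫ Y³ = 2 ∫ XY² f   (using E1)
  have e3 : (∫ t in (0:ℝ)..T, Y t ^ 3)
      = 2 * ∫ t in (0:ℝ)..T,
          X t * Y t ^ 2 * (ε * (X t ^ 2 + Y t ^ 2 - 1) * (a * X t + b * Y t + c)) := by
    have h := key0 (fun t => X t * Y t ^ 2)
      (fun t => ((-1) * (Y t ^ 3) + 2 * (X t ^ 2 * Y t))
        + 2 * (X t * Y t ^ 2 * (ε * (X t ^ 2 + Y t ^ 2 - 1) * (a * X t + b * Y t + c))))
      (fun t => ((hXd t).mul ((hYd t).pow 2)).congr_deriv (by simp only [Pi.pow_apply]; push_cast; ring))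
      (by fun_prop) (by simp only [hXT, hYT])
    rw [intervalIntegral.integral_add
        ((by fun_prop : Continuous fun t => (-1) * (Y t ^ 3)
          + 2 * (X t ^ 2 * Y t)).intervalIntegrable _ _)
        ((by fun_prop : Continuous fun t => 2 * (X t * Y t ^ 2 *
          (ε * (X t ^ 2 + Y t ^ 2 - 1) * (a * X t + b * Y t + c)))).intervalIntegrable _ _),
      intervalIntegral.integral_add
        ((by fun_prop : Continuous fun t => (-1) * (Y t ^ 3)).intervalIntegrable _ _)
        ((by fun_prop : Continuous fun t => 2 * (X t ^ 2 * Y t)).intervalIntegrable _ _),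
      intervalIntegral.integral_const_mul, intervalIntegral.integral_const_mul,
      intervalIntegral.integral_const_mul] at h
    rw [e1] at h
    linarith
  -- identity E4 : ∫ X² = ∫ Y² - ∫ XY f
  have e4 : (∫ t in (0:ℝ)..T, X t ^ 2)
      = (∫ t in (0:ℝ)..T, Y t ^ 2)
        - ∫ t in (0:ℝ)..T,
            X t * Y t * (ε * (X t ^ 2 + Y t ^ 2 - 1) * (a * X t + b * Y t + c)) := by
    have h := key0 (fun t => X t * Y t)
      (fun t => ((1 : ℝ) * (X t ^ 2) + (-1) * (Y t ^ 2))
        + 1 * (X t * Y t * (ε * (X t ^ 2 + Y t ^ 2 - 1) * (a * X t + b * Y t + c))))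
      (fun t => ((hXd t).mul (hYd t)).congr_deriv (by push_cast; ring))
      (by fun_prop) (by simp only [hXT, hYT])
    rw [intervalIntegral.integral_add
        ((by fun_prop : Continuous fun t => (1:ℝ) * (X t ^ 2)
          + (-1) * (Y t ^ 2)).intervalIntegrable _ _)
        ((by fun_prop : Continuous fun t => 1 * (X t * Y t *
          (ε * (X t ^ 2 + Y t ^ 2 - 1) * (a * X t + b * Y t + c)))).intervalIntegrable _ _),
      intervalIntegral.integral_add
        ((by fun_prop : Continuous fun t => (1:ℝ) * (X t ^ 2)).intervalIntegrable _ _)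
        ((by fun_prop : Continuous fun t => (-1 : ℝ) * (Y t ^ 2)).intervalIntegrable _ _),
      intervalIntegral.integral_const_mul, intervalIntegral.integral_const_mul,
      intervalIntegral.integral_const_mul] at h
    linarith
  -- identity E6 : ∫ Y² L = 0 (from the linear ODE for g = r² − 1, g(0) ≠ 0)
  have e6 : (∫ t in (0:ℝ)..T, Y t ^ 2 * (a * X t + b * Y t + c)) = 0 := by
    have hgd : ∀ t, HasDerivAt (fun t => X t ^ 2 + Y t ^ 2 - 1)
        (((2*ε) * (Y t ^ 2 * (a * X t + b * Y t + c))) * (X t ^ 2 + Y t ^ 2 - 1)) t := by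
      intro t
      have := (((hXd t).pow 2).add ((hYd t).pow 2)).sub_const 1
      exact this.congr_deriv (by push_cast; ring)
    have hode := linODE (u := fun t => (2*ε) * (Y t ^ 2 * (a * X t + b * Y t + c)))
      (by fun_prop) hgd 0 T
    have hgTeq : X T ^ 2 + Y T ^ 2 - 1 = X 0 ^ 2 + Y 0 ^ 2 - 1 := by rw [hXT, hYT]
    rw [hgTeq] at hode
    have hg0' : X 0 ^ 2 + Y 0 ^ 2 - 1 ≠ 0 := hg0
    have hexp : Real.exp (∫ s in (0:ℝ)..T, (2*ε) * (Y s ^ 2 * (a * X s + b * Y s + c))) = 1 := by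
      have hz : (X 0 ^ 2 + Y 0 ^ 2 - 1) *
          (Real.exp (∫ s in (0:ℝ)..T, (2*ε) * (Y s ^ 2 * (a * X s + b * Y s + c))) - 1) = 0 := by
        linear_combination -hode
      rcases mul_eq_zero.1 hz with h | h
      · exact absurd h hg0'
      · linarith [h]
    have hint0 : (∫ s in (0:ℝ)..T, (2*ε) * (Y s ^ 2 * (a * X s + b * Y s + c))) = 0 :=
      Real.exp_injective (by rw [hexp, Real.exp_zero])
    rw [intervalIntegral.integral_const_mul] at hint0
    have h2ε : (2*ε) ≠ 0 := by positivity
    exact (mul_eq_zero.1 hint0).resolve_left h2ε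
  -- decompose e6
  have e6' : a * (∫ t in (0:ℝ)..T, X t * Y t ^ 2) + b * (∫ t in (0:ℝ)..T, Y t ^ 3)
      + c * (∫ t in (0:ℝ)..T, Y t ^ 2) = 0 := by
    have hrw : (fun t => Y t ^ 2 * (a * X t + b * Y t + c))
        = fun t => (a * (X t * Y t ^ 2) + b * (Y t ^ 3)) + c * (Y t ^ 2) := by
      funext t; ring
    rw [hrw] at e6
    rw [intervalIntegral.integral_add
        ((by fun_prop : Continuous fun t => a * (X t * Y t ^ 2)
          + b * (Y t ^ 3)).intervalIntegrable _ _)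
        ((by fun_prop : Continuous fun t => c * (Y t ^ 2)).intervalIntegrable _ _),
      intervalIntegral.integral_add
        ((by fun_prop : Continuous fun t => a * (X t * Y t ^ 2)).intervalIntegrable _ _)
        ((by fun_prop : Continuous fun t => b * (Y t ^ 3)).intervalIntegrable _ _),
      intervalIntegral.integral_const_mul, intervalIntegral.integral_const_mul,
      intervalIntegral.integral_const_mul] at e6
    linarith
  -- abbreviations for the f-weighted integrals
  set IF : ℝ := ∫ t in (0:ℝ)..T,
      Y t ^ 3 * (ε * (X t ^ 2 + Y t ^ 2 - 1) * (a * X t + b * Y t + c)) with hIF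
  set IG : ℝ := ∫ t in (0:ℝ)..T,
      X t * Y t ^ 2 * (ε * (X t ^ 2 + Y t ^ 2 - 1) * (a * X t + b * Y t + c)) with hIG
  set IH : ℝ := ∫ t in (0:ℝ)..T,
      X t * Y t * (ε * (X t ^ 2 + Y t ^ 2 - 1) * (a * X t + b * Y t + c)) with hIH
  set M : ℝ := 2*|a| + 2*|b| + |c| with hM
  have hM0 : (0:ℝ) ≤ M := by rw [hM]; positivity
  -- bounds on those integrals
  have bound : ∀ (W : ℝ → ℝ), (∀ t, |W t| ≤ 8) →
      |∫ t in (0:ℝ)..T, W t * (ε * (X t ^ 2 + Y t ^ 2 - 1) * (a * X t + b * Y t + c))|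
        ≤ 8 * (ε * M / 2) * T := by
    intro W hW
    have := intervalIntegral.norm_integral_le_of_norm_le_const
      (a := (0:ℝ)) (b := T) (C := 8 * (ε * M / 2))
      (f := fun t => W t * (ε * (X t ^ 2 + Y t ^ 2 - 1) * (a * X t + b * Y t + c)))
      (fun t _ => by
        rw [Real.norm_eq_abs, abs_mul]
        have h1 := hW t
        have h2 := hfb t
        have h3 := abs_nonneg (W t)
        have h4 := abs_nonneg (ε * (X t ^ 2 + Y t ^ 2 - 1) * (a * X t + b * Y t + c))
        nlinarith)
    rw [Real.norm_eq_abs, abs_of_pos (by linarith : (0:ℝ) < T - 0)] at this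
    · linarith [this]
  have hIFb : |IF| ≤ 4 * ε * M * T := by
    have := bound (fun t => Y t ^ 3) (fun t => by
      have h := hYb t
      calc |Y t ^ 3| = |Y t| ^ 3 := by rw [abs_pow]
        _ ≤ 2 ^ 3 := by gcongr
        _ = 8 := by norm_num)
    rw [hIF]; convert this using 2 <;> ring
  have hIGb : |IG| ≤ 4 * ε * M * T := by
    have := bound (fun t => X t * Y t ^ 2) (fun t => by
      have h1 := hXb t; have h2 := hYb t
      rw [abs_mul, abs_pow]
      nlinarith [abs_nonneg (X t), abs_nonneg (Y t)])
    rw [hIG]; convert this using 2 <;> ring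
  have hIHb : |IH| ≤ 4 * ε * M * T := by
    have := bound (fun t => X t * Y t) (fun t => by
      have h1 := hXb t; have h2 := hYb t
      rw [abs_mul]
      nlinarith [abs_nonneg (X t), abs_nonneg (Y t)])
    rw [hIH]; convert this using 2 <;> ring
  -- lower bound for ∫ Y²
  have hsum : (∫ t in (0:ℝ)..T, (X t ^ 2 + Y t ^ 2))
      = (∫ t in (0:ℝ)..T, X t ^ 2) + ∫ t in (0:ℝ)..T, Y t ^ 2 :=
    intervalIntegral.integral_add
      ((by fun_prop : Continuous fun t => X t ^ 2).intervalIntegrable _ _)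
      ((by fun_prop : Continuous fun t => Y t ^ 2).intervalIntegrable _ _)
  have hlow : T * (1/2) ≤ ∫ t in (0:ℝ)..T, (X t ^ 2 + Y t ^ 2) := by
    have hconst : (∫ _t in (0:ℝ)..T, (1/2 : ℝ)) = T * (1/2) := by
      rw [intervalIntegral.integral_const]; simp [smul_eq_mul]
    rw [← hconst]
    apply intervalIntegral.integral_mono_on hT.le
      ((continuous_const).intervalIntegrable _ _)
      ((by fun_prop : Continuous fun t => X t ^ 2 + Y t ^ 2).intervalIntegrable _ _)
    intro t _
    exact (hU t).1.le
  have hεM : ε * M ≤ 1/16 := hε1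
  have hIE : T / 8 ≤ ∫ t in (0:ℝ)..T, Y t ^ 2 := by
    have h1 : (∫ t in (0:ℝ)..T, X t ^ 2) + (∫ t in (0:ℝ)..T, Y t ^ 2) ≥ T * (1/2) := by
      rw [← hsum]; exact hlow
    have h2 := e4
    have h3 : |IH| ≤ 4 * ε * M * T := hIHb
    have h4 : 4 * ε * M * T ≤ T / 4 := by nlinarith [hT.le]
    obtain ⟨h5a, h5b⟩ := abs_le.1 h3
    exact lin1 h2 h1 h4 h5a
  -- final contradiction
  have hfinal : c * (∫ t in (0:ℝ)..T, Y t ^ 2) = a * IF - 2 * b * IG := by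
    rw [e2, e3] at e6'
    linarith
  have habs : |c| * (T / 8) ≤ |c| * ∫ t in (0:ℝ)..T, Y t ^ 2 := by
    have := abs_nonneg c
    nlinarith [hIE]
  have : |c| * (T / 8) ≤ (|a| + 2*|b|) * (4 * ε * M * T) := by
    calc |c| * (T / 8) ≤ |c| * ∫ t in (0:ℝ)..T, Y t ^ 2 := habs
      _ = |c * ∫ t in (0:ℝ)..T, Y t ^ 2| := by
          rw [abs_mul, abs_of_nonneg (le_trans (by positivity) hIE)]
      _ = |a * IF - 2 * b * IG| := by rw [hfinal]
      _ ≤ |a| * |IF| + 2 * |b| * |IG| := by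
          calc |a * IF - 2 * b * IG| ≤ |a * IF| + |2 * b * IG| := abs_sub _ _
            _ = |a| * |IF| + 2 * |b| * |IG| := by
                rw [abs_mul, abs_mul, abs_mul]; norm_num
      _ ≤ (|a| + 2*|b|) * (4 * ε * M * T) := by
          have := abs_nonneg a; have := abs_nonneg b
          have := abs_nonneg IF; have := abs_nonneg IG
          nlinarith [hIFb, hIGb]
  have hT8 : 0 < T / 8 := by linarith
  have hlt : (|a| + 2*|b|) * (4 * ε * M * T) < |c| * (T / 8) := by
    have h := mul_lt_mul_of_pos_right hε2 hT8
    calc (|a| + 2*|b|) * (4 * ε * M * T) = (32 * ε * M * (|a| + 2*|b|)) * (T / 8) := by ring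
      _ < |c| * (T / 8) := h
  exact absurd (lt_of_le_of_lt this hlt) (lt_irrefl _)


lemma caseA {a b c ε : ℝ} {γ : ℝ → ℝ × ℝ} (hγ : IsEpsKuklesSol a b c ε γ)
    (t₀ : ℝ) (h0 : (γ t₀).1 ^ 2 + (γ t₀).2 ^ 2 - 1 = 0) :
    Set.range γ = unitCircleSet := by
  set X : ℝ → ℝ := fun t => (γ t).1 with hXdef
  set Y : ℝ → ℝ := fun t => (γ t).2 with hYdef
  have hXd : ∀ t, HasDerivAt X (-(Y t)) t := fun t => (hγ t).fst
  have hYd : ∀ t, HasDerivAt Y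
      (X t + ε * Y t * (X t ^ 2 + Y t ^ 2 - 1) * (a * X t + b * Y t + c)) t :=
    fun t => (hγ t).snd
  have Cγ : Continuous γ := continuous_iff_continuousAt.2 fun t => (hγ t).continuousAt
  have Cx : Continuous X := continuous_fst.comp Cγ
  have Cy : Continuous Y := continuous_snd.comp Cγ
  have hgd : ∀ t, HasDerivAt (fun t => X t ^ 2 + Y t ^ 2 - 1)
      (((2*ε) * (Y t ^ 2 * (a * X t + b * Y t + c))) * (X t ^ 2 + Y t ^ 2 - 1)) t := by
    intro t
    have := (((hXd t).pow 2).add ((hYd t).pow 2)).sub_const 1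
    exact this.congr_deriv (by push_cast; ring)
  have hode := linODE (u := fun t => (2*ε) * (Y t ^ 2 * (a * X t + b * Y t + c)))
    (by fun_prop) hgd t₀
  have hzero : ∀ t, X t ^ 2 + Y t ^ 2 - 1 = 0 := by
    intro t
    have h := hode t
    have h0' : X t₀ ^ 2 + Y t₀ ^ 2 - 1 = 0 := h0
    rw [h0', zero_mul] at h
    exact h
  have hd : ∀ t, HasDerivAt γ (-(γ t).2, (γ t).1) t := by
    intro t
    have h := hγ t
    have hz : (γ t).1 ^ 2 + (γ t).2 ^ 2 - 1 = 0 := hzero t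
    rw [hz] at h
    simpa using h
  have h0c : (γ 0).1 ^ 2 + (γ 0).2 ^ 2 = 1 := by
    have := hzero 0; change (γ 0).1 ^ 2 + (γ 0).2 ^ 2 - 1 = 0 at this; linarith
  exact rotation_range hd h0c

/-- For `c ≠ 0` there is `ε₀ > 0` such that for all `0 < ε < ε₀` the
system `ẋ = −y, ẏ = x + ε·y(x²+y²−1)(ax+by+c)` has the unit circle as a limit cycle:
the unit circle is the image of a nonconstant periodic solution, and there is an open
neighborhood `U` of the unit circle such that the image of every nonconstant periodic
solution contained in `U` is exactly the unit circle. -/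
theorem kukles_unit_circle_limit_cycle (a b c : ℝ) (hc : c ≠ 0) :
    ∃ ε₀ > (0:ℝ), ∀ ε : ℝ, 0 < ε → ε < ε₀ →
      (∃ γ : ℝ → ℝ × ℝ, IsEpsKuklesSol a b c ε γ ∧ IsPeriodicCurve γ ∧
        IsNonconstCurve γ ∧ Set.range γ = unitCircleSet) ∧
      (∃ U : Set (ℝ × ℝ), IsOpen U ∧ unitCircleSet ⊆ U ∧
        ∀ γ : ℝ → ℝ × ℝ, IsEpsKuklesSol a b c ε γ → IsPeriodicCurve γ →
          IsNonconstCurve γ → Set.range γ ⊆ U → Set.range γ = unitCircleSet) := by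
  classical
  set M : ℝ := 2*|a| + 2*|b| + |c| with hM
  have hc0 : 0 < |c| := abs_pos.2 hc
  have hM0 : 0 < M := by rw [hM]; positivity
  set D : ℝ := 32 * M * (|a| + 2*|b|) with hD
  have hD0 : 0 ≤ D := by rw [hD]; positivity
  refine ⟨min (1/(16*M)) (|c|/(D+1)), lt_min (by positivity) (by positivity), ?_⟩
  intro ε hε hεlt
  have hε1 : ε * M ≤ 1/16 := by
    have h1 : ε < 1/(16*M) := lt_of_lt_of_le hεlt (min_le_left _ _)
    rw [lt_div_iff₀ (by positivity)] at h1
    nlinarith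
  have hε2 : 32 * ε * M * (|a| + 2*|b|) < |c| := by
    have h1 : ε < |c|/(D+1) := lt_of_lt_of_le hεlt (min_le_right _ _)
    rw [lt_div_iff₀ (by positivity)] at h1
    have : 32 * ε * M * (|a| + 2*|b|) = ε * D := by rw [hD]; ring
    rw [this]
    nlinarith
  constructor
  · -- existence : γ(t) = (cos t, sin t)
    refine ⟨fun t => (Real.cos t, Real.sin t), ?_, ⟨2*Real.pi, by positivity, ?_⟩, ⟨0, Real.pi, ?_⟩, ?_⟩
    · intro t
      have key : HasDerivAt (fun t : ℝ => ((Real.cos t, Real.sin t) : ℝ × ℝ))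
          (-(Real.sin t), Real.cos t) t := (Real.hasDerivAt_cos t).prodMk (Real.hasDerivAt_sin t)
      have h2 : Real.cos t + ε * Real.sin t * (Real.cos t ^ 2 + Real.sin t ^ 2 - 1) *
          (a * Real.cos t + b * Real.sin t + c) = Real.cos t := by
        rw [Real.cos_sq_add_sin_sq]; ring
      simpa [h2] using key
    · intro t
      simp [Real.cos_add_two_pi, Real.sin_add_two_pi]
    · intro h
      have h1 := congrArg Prod.fst h
      simp [Real.cos_pi] at h1
      norm_num at h1
    · have := range_circle_param (x := fun t => Real.cos t) (y := fun t => Real.sin t) 1 0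
        (by norm_num) (fun t => by ring) (fun t => by ring)
      exact this
  · -- uniqueness in the annulus U
    refine ⟨{p : ℝ × ℝ | 1/2 < p.1 ^ 2 + p.2 ^ 2 ∧ p.1 ^ 2 + p.2 ^ 2 < 3/2}, ?_, ?_, ?_⟩
    · have hcont : Continuous fun p : ℝ × ℝ => p.1 ^ 2 + p.2 ^ 2 := by fun_prop
      exact (isOpen_lt continuous_const hcont).inter (isOpen_lt hcont continuous_const)
    · intro p hp
      have : p.1 ^ 2 + p.2 ^ 2 = 1 := hp
      constructor <;> (rw [this]; norm_num)
    · intro γ hsol hper hnc hrange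
      have hU : ∀ t, 1/2 < (γ t).1 ^ 2 + (γ t).2 ^ 2 ∧ (γ t).1 ^ 2 + (γ t).2 ^ 2 < 3/2 :=
        fun t => hrange ⟨t, rfl⟩
      by_cases hz : ∃ t₀, (γ t₀).1 ^ 2 + (γ t₀).2 ^ 2 - 1 = 0
      · obtain ⟨t₀, ht₀⟩ := hz
        exact caseA hsol t₀ ht₀
      · push_neg at hz
        obtain ⟨T, hT, per⟩ := hper
        exact absurd (caseB_false hsol hε hT per hU (hz 0) hε1 hε2) id
end

section
/- If c = 0 and a·b > 0, then the origin is an attracting (asymptotically stable) equilibrium of the Kukles system (K): the origin is Lyapunov stable, and there exists δ > 0 such that every solution γ of (K) with ‖γ(0)‖ < δ is defined for all t ≥ 0 and satisfies γ(t) → (0,0) as t → +∞. -/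
/-!
The origin is a weak focus whose first Lyapunov quantity `-ab/8` is negative. Completing
`(x² + y²)/2` by suitable cubic and quartic terms gives a Lyapunov function `V ≍ ‖p‖²` whose
derivative along the flow is `-(ab/8)(x² + y²)² + O(‖p‖⁵) ≤ -(ab/16)‖p‖⁴` near the origin.
Lyapunov's direct method then applies: a solution starting close to the origin cannot leave a
small ball, since `V` does not increase along it and is larger on the boundary sphere than at
the start; and along a solution that stayed away from the origin `V` would decrease at a fixed
rate, hence eventually become negative.
-/

/-- The Kukles vector field `(−y, x + y(x²+y²−1)(ax+by+c))`. -/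
def kuklesField (a b c : ℝ) (p : ℝ × ℝ) : ℝ × ℝ :=
  (-p.2, p.1 + p.2 * (p.1 ^ 2 + p.2 ^ 2 - 1) * (a * p.1 + b * p.2 + c))

open Filter Set Topology Asymptotics

theorem ContinuousOn.forall_lt_of_forall_Ico_lt {g : ℝ → ℝ} {ρ : ℝ} (hg : ContinuousOn g (Ici 0))
    (hstep : ∀ t ≥ 0, (∀ s ∈ Ico 0 t, g s < ρ) → g t < ρ) : ∀ t ≥ 0, g t < ρ := by
  intro T hT
  by_contra! hgT
  set S := Icc 0 T ∩ g ⁻¹' Ici ρ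
  have hS : IsCompact S := isCompact_Icc.of_isClosed_subset
    ((hg.mono Icc_subset_Ici_self).preimage_isClosed_of_isClosed isClosed_Icc isClosed_Ici)
    inter_subset_left
  obtain ⟨⟨ht₀, ht₁T⟩, ht₁⟩ := hS.sInf_mem ⟨T, ⟨hT, le_rfl⟩, hgT⟩
  refine (hstep _ ht₀ fun s hs => ?_).not_ge ht₁
  by_contra! hgs
  exact hs.2.not_ge (csInf_le hS.bddBelow ⟨⟨hs.1, hs.2.le.trans ht₁T⟩, hgs⟩)

section Lyapunov

variable {E : Type*} [NormedAddCommGroup E] [NormedSpace ℝ E]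

-- `W` is the orbital derivative `V̇ = DV · f`, specified through its effect on solutions so
-- that `V` need not be differentiated as a function on `E`.
def HasOrbitalDeriv (f : E → E) (V W : E → ℝ) : Prop :=
  ∀ (γ : ℝ → E) (t : ℝ), HasDerivAt γ (f (γ t)) t → HasDerivAt (fun s => V (γ s)) (W (γ t)) t

def IsLyapunovStableAtOrigin (f : E → E) : Prop :=
  ∀ ε > (0:ℝ), ∃ δ > (0:ℝ), ∀ γ : ℝ → E, (∀ t : ℝ, 0 ≤ t → HasDerivAt γ (f (γ t)) t) →
    ‖γ 0‖ < δ → ∀ t : ℝ, 0 ≤ t → ‖γ t‖ < ε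

def IsAttractingAtOrigin (f : E → E) : Prop :=
  ∃ δ > (0:ℝ), ∀ γ : ℝ → E, (∀ t : ℝ, 0 ≤ t → HasDerivAt γ (f (γ t)) t) →
    ‖γ 0‖ < δ → Tendsto γ atTop (𝓝 0)

def IsAsymptoticallyStableAtOrigin (f : E → E) : Prop :=
  IsLyapunovStableAtOrigin f ∧ IsAttractingAtOrigin f

variable {f : E → E} {V W : E → ℝ} {γ : ℝ → E}

theorem HasOrbitalDeriv.sub_le (hVW : HasOrbitalDeriv f V W) {x y C : ℝ} (hxy : x ≤ y)
    (hγ : ∀ s ∈ Icc x y, HasDerivAt γ (f (γ s)) s) (hC : ∀ s ∈ Ioo x y, W (γ s) ≤ C) :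
    V (γ y) - V (γ x) ≤ C * (y - x) := by
  have hV : ∀ s ∈ Icc x y, HasDerivAt (fun s => V (γ s)) (W (γ s)) s :=
    fun s hs => hVW γ s (hγ s hs)
  refine (convex_Icc x y).image_sub_le_mul_sub_of_deriv_le
    (fun s hs => (hV s hs).continuousAt.continuousWithinAt) ?_ ?_ x (left_mem_Icc.2 hxy) y
    (right_mem_Icc.2 hxy) hxy <;> rw [interior_Icc]
  · exact fun s hs => (hV s (Ioo_subset_Icc_self hs)).differentiableAt.differentiableWithinAt
  · intro s hs
    rw [(hV s (Ioo_subset_Icc_self hs)).deriv]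
    exact hC s hs

theorem HasOrbitalDeriv.norm_lt (hVW : HasOrbitalDeriv f V W) {ρ m : ℝ} (hm : 0 < m)
    (hV : ∀ p, ‖p‖ ≤ ρ → m * ‖p‖ ^ 2 ≤ V p) (hW : ∀ p, ‖p‖ ≤ ρ → W p ≤ 0)
    (hγ : ∀ t ≥ 0, HasDerivAt γ (f (γ t)) t) (hγ₀ : ‖γ 0‖ ≤ ρ) (hVγ₀ : V (γ 0) < m * ρ ^ 2) :
    ∀ t ≥ 0, ‖γ t‖ < ρ := by
  have hcont : ContinuousOn (fun t => ‖γ t‖) (Ici 0) :=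
    fun t ht => (hγ t ht).continuousAt.continuousWithinAt.norm
  refine hcont.forall_lt_of_forall_Ico_lt fun t ht hlt => ?_
  have hle : ‖γ t‖ ≤ ρ := by
    rcases ht.eq_or_lt with rfl | ht
    · exact hγ₀
    · exact ContinuousWithinAt.closure_le (by simp [closure_Ico ht.ne, ht.le])
        ((hcont t ht.le).mono Ico_subset_Ici_self) continuousWithinAt_const
        fun s hs => (hlt s hs).le
  have hdecr : V (γ t) - V (γ 0) ≤ 0 * (t - 0) :=
    hVW.sub_le ht (fun s hs => hγ s hs.1) fun s hs => hW _ (hlt s ⟨hs.1.le, hs.2⟩).le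
  have hsq : ‖γ t‖ ^ 2 < ρ ^ 2 := lt_of_mul_lt_mul_left (by linarith [hV _ hle]) hm.le
  exact lt_of_pow_lt_pow_left₀ 2 ((norm_nonneg _).trans hγ₀) hsq

theorem HasOrbitalDeriv.tendsto_zero (hVW : HasOrbitalDeriv f V W) {m k : ℝ} {n : ℕ}
    (hm : 0 < m) (hk : 0 < k) (hVc : ContinuousAt V 0) (hV₀ : V 0 = 0)
    (hγ : ∀ t ≥ 0, HasDerivAt γ (f (γ t)) t) (hV : ∀ t ≥ 0, m * ‖γ t‖ ^ 2 ≤ V (γ t))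
    (hW : ∀ t ≥ 0, W (γ t) ≤ -k * ‖γ t‖ ^ n) : Tendsto γ atTop (𝓝 0) := by
  have hanti : ∀ s t, 0 ≤ s → s ≤ t → V (γ t) ≤ V (γ s) := fun s t hs hst => by
    have := hVW.sub_le hst (fun u hu => hγ u (hs.trans hu.1)) fun u hu =>
      (hW u (hs.trans hu.1.le)).trans (by rw [neg_mul, neg_nonpos]; positivity)
    linarith
  have hsmall : ∀ η > 0, ∃ T ≥ 0, V (γ T) < η := by
    intro η hη
    by_contra! hlarge
    obtain ⟨r, hr, hball⟩ :=
      Metric.eventually_nhds_iff_ball.1 (hVc.eventually (gt_mem_nhds (hV₀ ▸ hη)))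
    have hfar : ∀ t ≥ 0, r ≤ ‖γ t‖ := fun t ht => by
      by_contra! h
      exact (hball _ (mem_ball_zero_iff.2 h)).not_ge (hlarge t ht)
    -- staying at distance `≥ r`, the solution makes `V` drop at rate `≥ c` until it is negative
    set c := k * r ^ n
    have hc : 0 < c := by positivity
    set T := V (γ 0) / c + 1
    have hT : 0 ≤ T := by
      have : 0 ≤ V (γ 0) := (mul_nonneg hm.le (sq_nonneg _)).trans (hV 0 le_rfl)
      positivity
    have hdrop : V (γ T) - V (γ 0) ≤ -c * (T - 0) :=
      hVW.sub_le hT (fun s hs => hγ s hs.1) fun s hs => (hW s hs.1.le).trans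
        (by nlinarith [pow_le_pow_left₀ hr.le (hfar s hs.1.le) n])
    have : c * T = V (γ 0) + c := by rw [mul_add, mul_div_cancel₀ _ hc.ne', mul_one]
    linarith [hlarge T hT]
  refine Metric.tendsto_atTop.2 fun ε hε => ?_
  obtain ⟨T, hT, hVT⟩ := hsmall (m * ε ^ 2) (by positivity)
  refine ⟨T, fun t ht => ?_⟩
  have hsq : ‖γ t‖ ^ 2 < ε ^ 2 :=
    lt_of_mul_lt_mul_left ((hV t (hT.trans ht)).trans_lt ((hanti T t hT ht).trans_lt hVT)) hm.le
  rw [dist_zero_right]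
  exact lt_of_pow_lt_pow_left₀ 2 hε.le hsq

theorem HasOrbitalDeriv.isLyapunovStableAtOrigin (hVW : HasOrbitalDeriv f V W) {m : ℝ}
    (hm : 0 < m) (hVc : ContinuousAt V 0) (hV₀ : V 0 = 0)
    (hV : ∀ᶠ p in 𝓝 0, m * ‖p‖ ^ 2 ≤ V p) (hW : ∀ᶠ p in 𝓝 0, W p ≤ 0) :
    IsLyapunovStableAtOrigin f := by
  intro ε hε
  obtain ⟨ρ, hρ, hball⟩ := Metric.nhds_basis_closedBall.eventually_iff.1 (hV.and hW)
  set r := min ε ρ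
  have hr : 0 < r := lt_min hε hρ
  obtain ⟨δ, hδ, hδV⟩ := Metric.eventually_nhds_iff_ball.1
    (hVc.eventually (gt_mem_nhds (by rw [hV₀]; positivity : V 0 < m * r ^ 2)))
  have hrρ : ∀ p : E, ‖p‖ ≤ r → p ∈ Metric.closedBall 0 ρ :=
    fun p hp => mem_closedBall_zero_iff.2 (hp.trans (min_le_right _ _))
  refine ⟨min δ r, lt_min hδ hr, fun γ hγ hγ₀ t ht => ?_⟩
  refine (hVW.norm_lt hm (fun p hp => (hball (hrρ p hp)).1) (fun p hp => (hball (hrρ p hp)).2)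
    hγ (hγ₀.le.trans (min_le_right _ _))
    (hδV _ (mem_ball_zero_iff.2 (hγ₀.trans_le (min_le_left _ _)))) t ht).trans_le (min_le_left _ _)

theorem HasOrbitalDeriv.isAsymptoticallyStableAtOrigin (hVW : HasOrbitalDeriv f V W)
    {m k : ℝ} {n : ℕ} (hm : 0 < m) (hk : 0 < k) (hVc : ContinuousAt V 0) (hV₀ : V 0 = 0)
    (hV : ∀ᶠ p in 𝓝 0, m * ‖p‖ ^ 2 ≤ V p) (hW : ∀ᶠ p in 𝓝 0, W p ≤ -k * ‖p‖ ^ n) :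
    IsAsymptoticallyStableAtOrigin f := by
  have hstable := hVW.isLyapunovStableAtOrigin hm hVc hV₀ hV <|
    hW.mono fun p hp => hp.trans (by rw [neg_mul, neg_nonpos]; positivity)
  refine ⟨hstable, ?_⟩
  obtain ⟨ρ, hρ, hball⟩ := Metric.nhds_basis_closedBall.eventually_iff.1 (hV.and hW)
  obtain ⟨δ, hδ, hstay⟩ := hstable ρ hρ
  have hin γ hγ hγ₀ t ht := hball (mem_closedBall_zero_iff.2 (hstay γ hγ hγ₀ t ht).le)
  exact ⟨δ, hδ, fun γ hγ hγ₀ => hVW.tendsto_zero hm hk hVc hV₀ hγ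
    (fun t ht => (hin γ hγ hγ₀ t ht).1) fun t ht => (hin γ hγ hγ₀ t ht).2⟩

end Lyapunov

theorem isBigO_norm_pow_of_le {E : Type*} [NormedAddCommGroup E] {i j : ℕ} (h : i ≤ j) :
    (fun p : E => ‖p‖ ^ j) =O[𝓝 0] fun p => ‖p‖ ^ i := by
  rcases h.eq_or_lt with rfl | h
  · exact isBigO_refl _ _
  · exact (isLittleO_norm_pow_norm_pow h).isBigO

theorem Asymptotics.IsBigO.mul_norm_pow {E : Type*} [NormedAddCommGroup E] {g h : E → ℝ}
    {i j : ℕ} (hg : g =O[𝓝 0] fun p => ‖p‖ ^ i) (hh : h =O[𝓝 0] fun p => ‖p‖ ^ j) :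
    (fun p => g p * h p) =O[𝓝 0] fun p => ‖p‖ ^ (i + j) :=
  (hg.mul hh).congr_right fun _ => (pow_add _ _ _).symm

theorem isBigO_fst_pow_mul_snd_pow {i j d : ℕ} (h : d ≤ i + j) :
    (fun p : ℝ × ℝ => p.1 ^ i * p.2 ^ j) =O[𝓝 0] fun p => ‖p‖ ^ d := by
  refine (isBigO_of_le _ fun p => ?_).trans (isBigO_norm_pow_of_le h)
  rw [norm_mul, norm_pow, norm_pow, norm_pow, norm_norm, pow_add]
  exact mul_le_mul (pow_le_pow_left₀ (norm_nonneg _) (norm_fst_le p) i)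
    (pow_le_pow_left₀ (norm_nonneg _) (norm_snd_le p) j) (by positivity) (by positivity)

theorem sq_norm_le_fst_sq_add_snd_sq (p : ℝ × ℝ) : ‖p‖ ^ 2 ≤ p.1 ^ 2 + p.2 ^ 2 := by
  rcases max_choice ‖p.1‖ ‖p.2‖ with h | h <;>
    rw [Prod.norm_def, h, Real.norm_eq_abs, sq_abs] <;> nlinarith [sq_nonneg p.1, sq_nonneg p.2]

noncomputable section

namespace Kukles

-- The cubic and quartic terms are chosen so that the terms of degree `≤ 4` of `V̇` reduce to
-- `L(1) (x² + y²)² = -(ab/8) (x² + y²)²`.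
def lyapunov (a b : ℝ) (p : ℝ × ℝ) : ℝ :=
  (p.1 ^ 2 + p.2 ^ 2) / 2
    + (-(2 * b / 3) * p.1 ^ 3 + -b * (p.1 * p.2 ^ 2) + a / 3 * p.2 ^ 3)
    + (-(a * b / 8) * (p.1 ^ 3 * p.2) + -(7 * a * b / 8) * (p.1 * p.2 ^ 3)
        + (a ^ 2 - 2 * b ^ 2) / 4 * p.2 ^ 4)

def lyapunovDeriv (a b : ℝ) (p : ℝ × ℝ) : ℝ :=
  (p.1 + (-2 * b * p.1 ^ 2 + -b * p.2 ^ 2)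
      + (-(3 * a * b / 8) * (p.1 ^ 2 * p.2) + -(7 * a * b / 8) * p.2 ^ 3)) * (-p.2)
  + (p.2 + (-2 * b * (p.1 * p.2) + a * p.2 ^ 2)
      + (-(a * b / 8) * p.1 ^ 3 + -(21 * a * b / 8) * (p.1 * p.2 ^ 2)
          + (a ^ 2 - 2 * b ^ 2) * p.2 ^ 3))
    * (p.1 + p.2 * (p.1 ^ 2 + p.2 ^ 2 - 1) * (a * p.1 + b * p.2))

theorem hasOrbitalDeriv (a b : ℝ) :
    HasOrbitalDeriv (kuklesField a b 0) (lyapunov a b) (lyapunovDeriv a b) := by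
  intro γ t h
  have hx : HasDerivAt (fun s => (γ s).1) (-(γ t).2) t := h.fst
  have hy : HasDerivAt (fun s => (γ s).2) (kuklesField a b 0 (γ t)).2 t := h.snd
  simp only [kuklesField, add_zero] at hy
  have H := ((((hx.pow 2).add (hy.pow 2)).div_const 2).add
      ((((hx.pow 3).const_mul (-(2 * b / 3))).add
        ((hx.mul (hy.pow 2)).const_mul (-b))).add
        ((hy.pow 3).const_mul (a / 3)))).add
    (((((hx.pow 3).mul hy).const_mul (-(a * b / 8))).add
        ((hx.mul (hy.pow 3)).const_mul (-(7 * a * b / 8)))).add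
      ((hy.pow 4).const_mul ((a ^ 2 - 2 * b ^ 2) / 4)))
  refine (H : HasDerivAt (fun s => lyapunov a b (γ s)) _ t).congr_deriv ?_
  simp only [lyapunovDeriv, Pi.pow_apply]
  ring

theorem continuousAt_lyapunov (a b : ℝ) : ContinuousAt (lyapunov a b) 0 := by
  unfold lyapunov
  fun_prop

theorem lyapunov_zero (a b : ℝ) : lyapunov a b 0 = 0 := by
  simp [lyapunov]

theorem lyapunov_sub_isBigO (a b : ℝ) :
    (fun p : ℝ × ℝ => lyapunov a b p - (p.1 ^ 2 + p.2 ^ 2) / 2) =O[𝓝 0] fun p => ‖p‖ ^ 3 := by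
  have hm i j (h : 3 ≤ i + j) := isBigO_fst_pow_mul_snd_pow (i := i) (j := j) h
  refine (((((((hm 3 0 le_rfl).const_mul_left (-(2 * b / 3))).add
    ((hm 1 2 le_rfl).const_mul_left (-b))).add
    ((hm 0 3 le_rfl).const_mul_left (a / 3))).add
    ((hm 3 1 (by norm_num)).const_mul_left (-(a * b / 8)))).add
    ((hm 1 3 (by norm_num)).const_mul_left (-(7 * a * b / 8)))).add
    ((hm 0 4 (by norm_num)).const_mul_left ((a ^ 2 - 2 * b ^ 2) / 4))).congr_left fun p => ?_
  simp only [lyapunov]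
  ring

-- The field is `(-y, x) + (0, q₂) + (0, q₄)` with `q₂, q₄` homogeneous of degrees 2 and 4; the
-- terms of `V̇` of degree `≥ 5` are `∂_y V · q₄ + ∂_y V₄ · q₂`.
theorem lyapunovDeriv_add_isBigO (a b : ℝ) :
    (fun p : ℝ × ℝ => lyapunovDeriv a b p + a * b / 8 * (p.1 ^ 2 + p.2 ^ 2) ^ 2)
      =O[𝓝 0] fun p => ‖p‖ ^ 5 := by
  have hm i j d (h : d ≤ i + j) := isBigO_fst_pow_mul_snd_pow (i := i) (j := j) h
  have hdyV : (fun p : ℝ × ℝ => p.2 + (-2 * b * (p.1 * p.2) + a * p.2 ^ 2)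
      + (-(a * b / 8) * p.1 ^ 3 + -(21 * a * b / 8) * (p.1 * p.2 ^ 2)
          + (a ^ 2 - 2 * b ^ 2) * p.2 ^ 3)) =O[𝓝 0] fun p => ‖p‖ ^ 1 := by
    refine ((((((hm 0 1 1 le_rfl).add ((hm 1 1 1 (by norm_num)).const_mul_left (-2 * b))).add
      ((hm 0 2 1 (by norm_num)).const_mul_left a)).add
      ((hm 3 0 1 (by norm_num)).const_mul_left (-(a * b / 8)))).add
      ((hm 1 2 1 (by norm_num)).const_mul_left (-(21 * a * b / 8)))).add
      ((hm 0 3 1 (by norm_num)).const_mul_left (a ^ 2 - 2 * b ^ 2))).congr_left fun p => ?_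
    ring
  have hdyV₄ : (fun p : ℝ × ℝ => -(a * b / 8) * p.1 ^ 3 + -(21 * a * b / 8) * (p.1 * p.2 ^ 2)
      + (a ^ 2 - 2 * b ^ 2) * p.2 ^ 3) =O[𝓝 0] fun p => ‖p‖ ^ 3 := by
    refine ((((hm 3 0 3 le_rfl).const_mul_left (-(a * b / 8))).add
      ((hm 1 2 3 le_rfl).const_mul_left (-(21 * a * b / 8)))).add
      ((hm 0 3 3 le_rfl).const_mul_left (a ^ 2 - 2 * b ^ 2))).congr_left fun p => ?_
    ring
  have hq₂ : (fun p : ℝ × ℝ => -(p.2 * (a * p.1 + b * p.2))) =O[𝓝 0] fun p => ‖p‖ ^ 2 := by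
    refine (((hm 1 1 2 le_rfl).const_mul_left (-a)).add
      ((hm 0 2 2 le_rfl).const_mul_left (-b))).congr_left fun p => ?_
    ring
  have hq₄ : (fun p : ℝ × ℝ => p.2 * (p.1 ^ 2 + p.2 ^ 2) * (a * p.1 + b * p.2))
      =O[𝓝 0] fun p => ‖p‖ ^ 4 := by
    refine (((((hm 3 1 4 le_rfl).const_mul_left a).add
      ((hm 2 2 4 le_rfl).const_mul_left b)).add
      ((hm 1 3 4 le_rfl).const_mul_left a)).add
      ((hm 0 4 4 le_rfl).const_mul_left b)).congr_left fun p => ?_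
    ring
  refine ((hdyV.mul_norm_pow hq₄).add (hdyV₄.mul_norm_pow hq₂)).congr_left fun p => ?_
  simp only [lyapunovDeriv]
  ring

theorem eventually_lyapunov_ge (a b : ℝ) :
    ∀ᶠ p in 𝓝 (0 : ℝ × ℝ), 1 / 4 * ‖p‖ ^ 2 ≤ lyapunov a b p := by
  filter_upwards [((lyapunov_sub_isBigO a b).trans_isLittleO
    (isLittleO_norm_pow_norm_pow (by norm_num : 2 < 3))).bound (by norm_num : (0:ℝ) < 1 / 4)]
    with p hp
  rw [Real.norm_eq_abs, norm_pow, norm_norm] at hp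
  linarith [neg_abs_le (lyapunov a b p - (p.1 ^ 2 + p.2 ^ 2) / 2), sq_norm_le_fst_sq_add_snd_sq p]

theorem eventually_lyapunovDeriv_le {a b : ℝ} (hab : 0 < a * b) :
    ∀ᶠ p in 𝓝 (0 : ℝ × ℝ), lyapunovDeriv a b p ≤ -(a * b / 16) * ‖p‖ ^ 4 := by
  filter_upwards [((lyapunovDeriv_add_isBigO a b).trans_isLittleO
    (isLittleO_norm_pow_norm_pow (by norm_num : 4 < 5))).bound (by positivity : 0 < a * b / 16)]
    with p hp
  rw [Real.norm_eq_abs, norm_pow, norm_norm] at hp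
  have hr : ‖p‖ ^ 4 ≤ (p.1 ^ 2 + p.2 ^ 2) ^ 2 := by
    rw [show ‖p‖ ^ 4 = (‖p‖ ^ 2) ^ 2 by ring]
    exact pow_le_pow_left₀ (by positivity) (sq_norm_le_fst_sq_add_snd_sq p) 2
  nlinarith [le_abs_self (lyapunovDeriv a b p + a * b / 8 * (p.1 ^ 2 + p.2 ^ 2) ^ 2)]

end Kukles

end

/-- If `c = 0` and `a·b > 0`, the origin is an attracting
(asymptotically stable) equilibrium of the Kukles system: it is Lyapunov stable,
and there is `δ > 0` such that every solution defined for all `t ≥ 0` with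
`‖γ(0)‖ < δ` satisfies `γ(t) → (0,0)` as `t → +∞`. -/
theorem kukles_origin_attracting (a b c : ℝ) (hc : c = 0) (hab : 0 < a * b) :
    (∀ ε > (0:ℝ), ∃ δ > (0:ℝ), ∀ γ : ℝ → ℝ × ℝ,
        (∀ t : ℝ, 0 ≤ t → HasDerivAt γ (kuklesField a b c (γ t)) t) →
        ‖γ 0‖ < δ → ∀ t : ℝ, 0 ≤ t → ‖γ t‖ < ε) ∧
    (∃ δ > (0:ℝ), ∀ γ : ℝ → ℝ × ℝ,
        (∀ t : ℝ, 0 ≤ t → HasDerivAt γ (kuklesField a b c (γ t)) t) →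
        ‖γ 0‖ < δ →
        Filter.Tendsto γ Filter.atTop (nhds ((0:ℝ), (0:ℝ)))) := by
  subst hc
  exact (Kukles.hasOrbitalDeriv a b).isAsymptoticallyStableAtOrigin (by norm_num)
    (by positivity : 0 < a * b / 16) (Kukles.continuousAt_lyapunov a b) (Kukles.lyapunov_zero a b)
    (Kukles.eventually_lyapunov_ge a b) (Kukles.eventually_lyapunovDeriv_le hab)
end

section
/- For every n ∈ ℕ, every h > 0, and all real coefficients b_{2i,2j} (0 ≤ i + j ≤ n), setting x(t) = √(2h)·cos t, y(t) = −√(2h)·sin t, and g₁(x,y) = y·(1−x²−y²)·Σ_{i+j=0}^{n} b_{2i,2j} x^{2i} y^{2j}, the first Melnikov function satisfies ∫₀^{2π} y(t)·g₁(x(t), y(t)) dt = π·h·(1−2h)·( 2·b₀₀ + Σ_{k=1}^{n} Σ_{i+j=k} [ (2i)!·(2j)!·(2j+1) / ( 2^{i+j−1} · i! · j! · (i+j+1)! ) ]·b_{2i,2j}·h^{i+j} ), a polynomial in h of degree at most n + 2. -/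
open Real intervalIntegral



lemma prodfact (m : ℕ) : (∏ i ∈ Finset.range m, (2*(i:ℝ)+1)/(2*i+2))
    = (2*m).factorial / (4^m * m.factorial * m.factorial) := by
  induction m with
  | zero => simp
  | succ k ih =>
    rw [Finset.prod_range_succ, ih]
    have h1 : 2*(k+1) = (2*k+1)+1 := by ring
    rw [h1, Nat.factorial_succ, Nat.factorial_succ, Nat.factorial_succ]
    have hk : ((2*k).factorial : ℝ) ≠ 0 := Nat.cast_ne_zero.2 (Nat.factorial_ne_zero _)
    have hk2 : (k.factorial : ℝ) ≠ 0 := Nat.cast_ne_zero.2 (Nat.factorial_ne_zero _)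
    push_cast
    field_simp
    ring

lemma sinpow (m : ℕ) : ∫ x in (0:ℝ)..(2*Real.pi), Real.sin x ^ (2*m)
    = 2 * Real.pi * ((2*m).factorial / (4^m * m.factorial * m.factorial)) := by
  have hper : Function.Periodic (fun x => Real.sin x ^ (2*m)) Real.pi := by
    intro x; simp [Real.sin_pi_sub, pow_mul, ← Real.sin_sq_eq_half_sub]
  have hsplit : (∫ x in (0:ℝ)..(2*Real.pi), Real.sin x ^ (2*m))
      = (∫ x in (0:ℝ)..Real.pi, Real.sin x ^ (2*m)) + ∫ x in Real.pi..(2*Real.pi), Real.sin x ^ (2*m) := by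
    rw [intervalIntegral.integral_add_adjacent_intervals] <;>
      exact (Continuous.intervalIntegrable (by fun_prop) _ _)
  have h2 : (∫ x in Real.pi..(2*Real.pi), Real.sin x ^ (2*m))
      = ∫ x in (0:ℝ)..Real.pi, Real.sin x ^ (2*m) := by
    have := hper.intervalIntegral_add_eq Real.pi 0
    simpa [two_mul] using this
  rw [hsplit, h2, integral_sin_pow_even, prodfact]
  ring


lemma melI (a : ℕ) : ∀ b : ℕ, (∫ x in (0:ℝ)..(2*Real.pi), Real.sin x ^ (2*b) * Real.cos x ^ (2*a))
    = 2 * Real.pi * ((2*a).factorial * (2*b).factorial /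
        (4^(a+b) * a.factorial * b.factorial * (a+b).factorial)) := by
  induction a with
  | zero =>
    intro b
    simp only [Nat.mul_zero, pow_zero, mul_one, Nat.zero_add, Nat.factorial_zero]
    rw [sinpow]
    push_cast
    ring
  | succ a ih =>
    intro b
    have hpt : ∀ x ∈ Set.uIcc (0:ℝ) (2*Real.pi),
        Real.sin x ^ (2*b) * Real.cos x ^ (2*(a+1))
        = Real.sin x ^ (2*b) * Real.cos x ^ (2*a) - Real.sin x ^ (2*(b+1)) * Real.cos x ^ (2*a) := by
      intro x _
      have : Real.cos x ^ 2 = 1 - Real.sin x ^ 2 := by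
        rw [Real.cos_sq']
      calc Real.sin x ^ (2*b) * Real.cos x ^ (2*(a+1))
          = Real.sin x ^ (2*b) * (Real.cos x ^ (2*a) * Real.cos x ^ 2) := by ring
        _ = Real.sin x ^ (2*b) * (Real.cos x ^ (2*a) * (1 - Real.sin x ^ 2)) := by rw [this]
        _ = _ := by ring
    rw [intervalIntegral.integral_congr hpt, intervalIntegral.integral_sub
        ((Continuous.intervalIntegrable (by fun_prop) _ _))
        ((Continuous.intervalIntegrable (by fun_prop) _ _)), ih b, ih (b+1)]
    have h1 : 2*(a+1) = (2*a+1)+1 := by ring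
    have h2 : 2*(b+1) = (2*b+1)+1 := by ring
    have h3 : a+1+b = (a+b)+1 := by ring
    have h4 : a+(b+1) = (a+b)+1 := by ring
    rw [h1, h2, h3, h4]
    simp only [Nat.factorial_succ]
    have e1 : ((2*a).factorial : ℝ) ≠ 0 := Nat.cast_ne_zero.2 (Nat.factorial_ne_zero _)
    have e2 : ((2*b).factorial : ℝ) ≠ 0 := Nat.cast_ne_zero.2 (Nat.factorial_ne_zero _)
    have e3 : (a.factorial : ℝ) ≠ 0 := Nat.cast_ne_zero.2 (Nat.factorial_ne_zero _)
    have e4 : (b.factorial : ℝ) ≠ 0 := Nat.cast_ne_zero.2 (Nat.factorial_ne_zero _)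
    have e5 : ((a+b).factorial : ℝ) ≠ 0 := Nat.cast_ne_zero.2 (Nat.factorial_ne_zero _)
    push_cast
    field_simp
    ring


lemma termeq (h : ℝ) (i j m : ℕ) (hij : i + j = m + 1) (bb : ℝ) :
    (2*h*(1-2*h)*(2*h)^(i+j)*bb) *
      (2*Real.pi * ((2*i).factorial * (2*(j+1)).factorial /
        (4^(i+(j+1)) * i.factorial * (j+1).factorial * (i+(j+1)).factorial)))
    = Real.pi*h*(1-2*h) *
        ((((2*i).factorial * (2*j).factorial * (2*j+1) : ℝ)) /
            ((2:ℝ)^(i+j-1) * i.factorial * j.factorial * (i+j+1).factorial) * bb * h^(i+j)) := by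
  have h1 : i+(j+1) = m+2 := by omega
  have h2 : 2*(j+1) = (2*j+1)+1 := by ring
  rw [h1, h2, hij]
  simp only [Nat.add_sub_cancel, Nat.factorial_succ]
  have h4 : (4:ℝ)^(m+2) = 2^(2*m+4) := by
    rw [show (4:ℝ)=2^2 by norm_num, ← pow_mul]; ring_nf
  rw [h4]
  have e1 : ((2*i).factorial : ℝ) ≠ 0 := Nat.cast_ne_zero.2 (Nat.factorial_ne_zero _)
  have e2 : ((2*j).factorial : ℝ) ≠ 0 := Nat.cast_ne_zero.2 (Nat.factorial_ne_zero _)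
  have e3 : (i.factorial : ℝ) ≠ 0 := Nat.cast_ne_zero.2 (Nat.factorial_ne_zero _)
  have e4 : (j.factorial : ℝ) ≠ 0 := Nat.cast_ne_zero.2 (Nat.factorial_ne_zero _)
  have e5 : ((m+2).factorial : ℝ) ≠ 0 := Nat.cast_ne_zero.2 (Nat.factorial_ne_zero _)
  have e6 : ((2:ℝ))^(2*m+4) ≠ 0 := by positivity
  have e7 : ((2:ℝ))^m ≠ 0 := by positivity
  push_cast
  field_simp
  ring

/-- For every `n ∈ ℕ`, `h > 0` and coefficients `b_{2i,2j}`
(`0 ≤ i+j ≤ n`), with `x(t) = √(2h)·cos t`, `y(t) = −√(2h)·sin t` and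
`g₁(x,y) = y·(1−x²−y²)·Σ_{i+j=0}^{n} b_{2i,2j} x^{2i} y^{2j}`, the first Melnikov
function satisfies
`∫₀^{2π} y(t)·g₁(x(t),y(t)) dt
  = π·h·(1−2h)·(2·b₀₀ + Σ_{k=1}^{n} Σ_{i+j=k} (2i)!(2j)!(2j+1) / (2^{i+j−1} i! j! (i+j+1)!) · b_{2i,2j} · h^{i+j})`. -/
theorem kukles_odd_melnikov (n : ℕ) (b : ℕ → ℕ → ℝ) (h : ℝ) (hh : 0 < h) :
    (∫ t in (0:ℝ)..(2 * Real.pi),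
        (-(Real.sqrt (2 * h)) * Real.sin t) *
          ((-(Real.sqrt (2 * h)) * Real.sin t) *
            (1 - (Real.sqrt (2 * h) * Real.cos t) ^ 2
               - (-(Real.sqrt (2 * h)) * Real.sin t) ^ 2) *
            (∑ k ∈ Finset.range (n + 1), ∑ p ∈ Finset.HasAntidiagonal.antidiagonal k,
              b p.1 p.2 * (Real.sqrt (2 * h) * Real.cos t) ^ (2 * p.1) *
                (-(Real.sqrt (2 * h)) * Real.sin t) ^ (2 * p.2))))
      = Real.pi * h * (1 - 2 * h) *
          (2 * b 0 0 +
            ∑ k ∈ Finset.Icc 1 n, ∑ p ∈ Finset.HasAntidiagonal.antidiagonal k,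
              ((Nat.factorial (2 * p.1) * Nat.factorial (2 * p.2) * (2 * p.2 + 1) : ℝ) /
                  ((2:ℝ) ^ (p.1 + p.2 - 1) * Nat.factorial p.1 * Nat.factorial p.2 *
                    Nat.factorial (p.1 + p.2 + 1))) *
                b p.1 p.2 * h ^ (p.1 + p.2)) := by
  have hs2 : Real.sqrt (2*h) ^ 2 = 2*h := Real.sq_sqrt (by linarith)
  -- pointwise rewrite of the integrand
  have hpt : ∀ t ∈ Set.uIcc (0:ℝ) (2*Real.pi),
      (-(Real.sqrt (2 * h)) * Real.sin t) *
          ((-(Real.sqrt (2 * h)) * Real.sin t) *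
            (1 - (Real.sqrt (2 * h) * Real.cos t) ^ 2
               - (-(Real.sqrt (2 * h)) * Real.sin t) ^ 2) *
            (∑ k ∈ Finset.range (n + 1), ∑ p ∈ Finset.HasAntidiagonal.antidiagonal k,
              b p.1 p.2 * (Real.sqrt (2 * h) * Real.cos t) ^ (2 * p.1) *
                (-(Real.sqrt (2 * h)) * Real.sin t) ^ (2 * p.2)))
      = ∑ k ∈ Finset.range (n + 1), ∑ p ∈ Finset.HasAntidiagonal.antidiagonal k,
          (2*h*(1-2*h)*(2*h)^(p.1+p.2)*b p.1 p.2) *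
            (Real.sin t ^ (2*(p.2+1)) * Real.cos t ^ (2*p.1)) := by
    intro t _
    have hX : ∀ m : ℕ, (Real.sqrt (2*h) * Real.cos t) ^ (2*m)
        = (2*h)^m * Real.cos t ^ (2*m) := by
      intro m
      rw [mul_pow, pow_mul, hs2, pow_mul]
    have hY : ∀ m : ℕ, (-(Real.sqrt (2*h)) * Real.sin t) ^ (2*m)
        = (2*h)^m * Real.sin t ^ (2*m) := by
      intro m
      rw [mul_pow, pow_mul, neg_sq, hs2, pow_mul]
    have hmid : 1 - (Real.sqrt (2*h) * Real.cos t) ^ 2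
        - (-(Real.sqrt (2*h)) * Real.sin t) ^ 2 = 1 - 2*h := by
      have hc := Real.sin_sq_add_cos_sq t
      linear_combination (-(Real.cos t)^2 - (Real.sin t)^2) * hs2 + (-(2*h)) * hc
    have hkey : (-(Real.sqrt (2*h)) * Real.sin t) * (-(Real.sqrt (2*h)) * Real.sin t)
        = 2*h*Real.sin t^2 := by
      have : (-(Real.sqrt (2*h)) * Real.sin t) * (-(Real.sqrt (2*h)) * Real.sin t)
          = Real.sqrt (2*h)^2 * Real.sin t^2 := by ring
      rw [this, hs2]
    rw [hmid]
    simp only [Finset.mul_sum]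
    refine Finset.sum_congr rfl fun k _ => Finset.sum_congr rfl fun p _ => ?_
    rw [hX p.1, hY p.2]
    calc (-(Real.sqrt (2*h)) * Real.sin t) *
          ((-(Real.sqrt (2*h)) * Real.sin t) * (1 - 2*h) *
            (b p.1 p.2 * ((2*h)^p.1 * Real.cos t ^ (2*p.1)) *
              ((2*h)^p.2 * Real.sin t ^ (2*p.2))))
        = ((-(Real.sqrt (2*h)) * Real.sin t) * (-(Real.sqrt (2*h)) * Real.sin t)) *
            ((1 - 2*h) * (b p.1 p.2 * ((2*h)^p.1 * Real.cos t ^ (2*p.1)) *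
              ((2*h)^p.2 * Real.sin t ^ (2*p.2)))) := by ring
      _ = (2*h*Real.sin t^2) * ((1 - 2*h) * (b p.1 p.2 * ((2*h)^p.1 * Real.cos t ^ (2*p.1)) *
              ((2*h)^p.2 * Real.sin t ^ (2*p.2)))) := by rw [hkey]
      _ = (2*h*(1-2*h)*(2*h)^(p.1+p.2)*b p.1 p.2) *
            (Real.sin t ^ (2*(p.2+1)) * Real.cos t ^ (2*p.1)) := by
          rw [pow_add, show 2*(p.2+1) = 2*p.2+2 by ring, pow_add]
          ring
  rw [intervalIntegral.integral_congr hpt]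
  rw [intervalIntegral.integral_finset_sum
    (fun k _ => Continuous.intervalIntegrable (by fun_prop) _ _)]
  have hLHS : ∀ k ∈ Finset.range (n+1),
      (∫ t in (0:ℝ)..(2*Real.pi), ∑ p ∈ Finset.HasAntidiagonal.antidiagonal k,
        (2*h*(1-2*h)*(2*h)^(p.1+p.2)*b p.1 p.2) *
          (Real.sin t ^ (2*(p.2+1)) * Real.cos t ^ (2*p.1)))
      = ∑ p ∈ Finset.HasAntidiagonal.antidiagonal k,
          (2*h*(1-2*h)*(2*h)^(p.1+p.2)*b p.1 p.2) *
            (2 * Real.pi * ((2*p.1).factorial * (2*(p.2+1)).factorial /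
              (4^(p.1+(p.2+1)) * (p.1).factorial * (p.2+1).factorial * (p.1+(p.2+1)).factorial))) := by
    intro k _
    rw [intervalIntegral.integral_finset_sum
      (fun p _ => Continuous.intervalIntegrable (by fun_prop) _ _)]
    refine Finset.sum_congr rfl fun p _ => ?_
    rw [intervalIntegral.integral_const_mul, melI p.1 (p.2+1)]
  rw [Finset.sum_congr rfl hLHS]
  have hsplit : Finset.range (n+1) = insert 0 (Finset.Icc 1 n) := by
    ext x; simp [Finset.mem_range, Finset.mem_Icc]; omega
  rw [hsplit, Finset.sum_insert (by simp), mul_add, Finset.mul_sum]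
  congr 1
  · simp [Nat.factorial]
    ring
  · refine Finset.sum_congr rfl fun k hk => ?_
    rw [Finset.mul_sum]
    refine Finset.sum_congr rfl fun p hp => ?_
    have hij : p.1 + p.2 = k := Finset.HasAntidiagonal.mem_antidiagonal.1 hp
    obtain ⟨m, rfl⟩ : ∃ m, k = m+1 := ⟨k-1, by have := (Finset.mem_Icc.1 hk).1; omega⟩
    exact termeq h p.1 p.2 m (by omega) (b p.1 p.2)
end
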